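/- arXiv:2401.16954 — 4 statements merged into one kernel-verified Lean document; each statement's English description precedes it below -/
import Mathlib

section
/- Let ν_y and ν_x be probability measures on ℝ × {0,1} (the conditional laws of (T, δ) given X = y and X = x). Then Φ(y,t,x) := ∫ ξ_x(s,d,t) dν_y(s,d) = ∫_{(0,t]} dH¹_y(v)/(1 − H_x(v)) − ∫_{(0,t]} (1 − H_y(v)) dH¹_x(v)/(1 − H_x(v))². In particular, taking ν_y = ν_x, Φ(x,t,x) = 0 for every t ≥ 0. -/
/-!
Integrating the first term of `ξ_x` against `ν_y` only sees the part of `ν_y` with `δ = 1`,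
pushed forward to the first coordinate, i.e. `dH¹_y`. The second term is a `dH¹_x`-integral
of `1{u ≤ s}`; Fubini turns its `ν_y`-integral into a `dH¹_x`-integral of `ν_y(T ≥ u)`, which is
`1 - H_y(u)` since `H_y` is continuous. For `ν_y = ν_x` the two integrands agree because
`1 - H_x ≥ θ > 0` on `(0, t]`.
-/

open MeasureTheory Set

namespace Stmt3

/-- First-coordinate distribution function `H_ν(t) = ν((-∞,t] × {0,1})`. -/
noncomputable def Hd (ν : Measure (ℝ × Bool)) (t : ℝ) : ℝ :=
  (ν (Iic t ×ˢ (univ : Set Bool))).toReal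

/-- Subdistribution function `H¹_ν(t) = ν((-∞,t] × {1})`. -/
noncomputable def H1d (ν : Measure (ℝ × Bool)) (t : ℝ) : ℝ :=
  (ν (Iic t ×ˢ ({true} : Set Bool))).toReal

/-- Lebesgue–Stieltjes measure of `H¹_ν`: first marginal of `ν` restricted to `δ = 1`. -/
noncomputable def H1m (ν : Measure (ℝ × Bool)) : Measure ℝ :=
  Measure.map Prod.fst (ν.restrict {q : ℝ × Bool | q.2 = true})

/-- `ξ_x(s,d,t) = 1{s ≤ t, d = 1}/(1-H_x(s)) - ∫_{(0,t]} 1{u ≤ s} dH¹_x(u)/(1-H_x(u))²`. -/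
noncomputable def xi (νx : Measure (ℝ × Bool)) (t s : ℝ) (d : Bool) : ℝ :=
  (if s ≤ t ∧ d = true then 1 else 0) / (1 - Hd νx s) -
    ∫ u in Ioc 0 t, (if u ≤ s then 1 else 0) / (1 - Hd νx u) ^ 2 ∂(H1m νx)

instance (ν : Measure (ℝ × Bool)) [IsFiniteMeasure ν] : IsFiniteMeasure (H1m ν) := by
  unfold H1m
  infer_instance

section Fubini

variable {α : Type*} [MeasurableSpace α] {ν : Measure α} [IsFiniteMeasure ν]
  {μ : Measure ℝ} [SFinite μ] {X : α → ℝ} {f : ℝ → ℝ}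

lemma integrable_ite_le_mul (hX : Measurable X) (hf : Integrable f μ) :
    Integrable (fun p : α × ℝ => (if p.2 ≤ X p.1 then 1 else 0) * f p.2) (ν.prod μ) := by
  refine (hf.comp_snd ν).mono ?_ (ae_of_all _ fun p => ?_)
  · exact ((Measurable.ite (measurableSet_le measurable_snd (hX.comp measurable_fst))
      measurable_const measurable_const).aestronglyMeasurable).mul hf.1.comp_snd
  · split_ifs <;> simp

lemma integral_integral_ite_le_mul (hX : Measurable X) (hf : Integrable f μ) :
    ∫ a, ∫ u, (if u ≤ X a then 1 else 0) * f u ∂μ ∂ν = ∫ u, ν.real {a | u ≤ X a} * f u ∂μ := by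
  rw [integral_integral_swap (integrable_ite_le_mul hX hf)]
  refine integral_congr_ae (ae_of_all _ fun u => ?_)
  have hmeas : MeasurableSet {a | u ≤ X a} := measurableSet_le measurable_const hX
  simp only [integral_mul_const, ← integral_indicator_one hmeas]
  rfl

end Fubini

section Marginal

variable {ν : Measure (ℝ × Bool)} [IsProbabilityMeasure ν]

lemma Hd_eq_cdf_fst : Hd ν = ProbabilityTheory.cdf ν.fst := by
  ext x
  rw [ProbabilityTheory.cdf_eq_real, measureReal_def, Measure.fst_apply measurableSet_Iic, Hd,
    prod_univ]

lemma Hd_monotone : Monotone (Hd ν) := Hd_eq_cdf_fst (ν := ν) ▸ (ProbabilityTheory.cdf _).mono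

lemma fst_singleton_eq_zero (hc : Continuous (Hd ν)) (u : ℝ) : ν.fst {u} = 0 := by
  rw [← ProbabilityTheory.measure_cdf ν.fst, StieltjesFunction.measure_singleton,
    ← Hd_eq_cdf_fst, hc.continuousWithinAt.leftLim_eq, sub_self, ENNReal.ofReal_zero]

lemma measureReal_fst_ge (hc : Continuous (Hd ν)) (u : ℝ) :
    ν.real {q | u ≤ q.1} = 1 - Hd ν u := by
  have hfst : ν.real {q | u ≤ q.1} = ν.fst.real (Iic u)ᶜ := by
    rw [compl_Iic, measureReal_congr (Ioi_ae_eq_Ici' (fst_singleton_eq_zero hc u)), Measure.fst,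
      map_measureReal_apply measurable_fst measurableSet_Ici]
    rfl
  rw [hfst, probReal_compl_eq_one_sub measurableSet_Iic, Hd_eq_cdf_fst,
    ProbabilityTheory.cdf_eq_real]

lemma H1m_Iic_zero (hc : Continuous (Hd ν)) (hsupp : ν {q : ℝ × Bool | q.1 < 0} = 0) :
    H1m ν (Iic 0) = 0 := by
  have hle : H1m ν ≤ ν.fst := Measure.map_mono Measure.restrict_le_self measurable_fst
  refine nonpos_iff_eq_zero.1 ((hle _).trans_eq ?_)
  rw [← measure_congr (Iio_ae_eq_Iic' (fst_singleton_eq_zero hc 0)),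
    Measure.fst_apply measurableSet_Iio]
  exact hsupp

lemma H1m_restrict_Ioc (hc : Continuous (Hd ν)) (hsupp : ν {q : ℝ × Bool | q.1 < 0} = 0)
    (t : ℝ) : (H1m ν).restrict (Ioc 0 t) = (H1m ν).restrict (Iic t) := by
  have hIoc : Iic t \ Iic 0 = Ioc 0 t := by
    ext v
    simp [and_comm]
  rw [← hIoc, Measure.restrict_congr_set (sdiff_null_ae_eq_self (H1m_Iic_zero hc hsupp))]

lemma le_one_sub_Hd_of_le {t θ : ℝ} (ht : 0 ≤ t) (hθle : ∀ s ∈ Icc (0 : ℝ) t, θ ≤ 1 - Hd ν s)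
    {s : ℝ} (hs : s ≤ t) : θ ≤ 1 - Hd ν s :=
  (hθle _ ⟨le_max_right s 0, max_le hs ht⟩).trans
    (sub_le_sub_left (Hd_monotone (le_max_left s 0)) 1)

end Marginal

section Bounded

variable {νx : Measure (ℝ × Bool)} [IsProbabilityMeasure νx] {t θ : ℝ}

lemma integrableOn_inv_one_sub_Hd_sq (μ : Measure ℝ) [IsFiniteMeasure μ] (ht : 0 ≤ t)
    (hθ : 0 < θ) (hθle : ∀ s ∈ Icc (0 : ℝ) t, θ ≤ 1 - Hd νx s) :
    IntegrableOn (fun u => ((1 - Hd νx u) ^ 2)⁻¹) (Ioc 0 t) μ := by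
  refine .of_bound (measure_lt_top μ _)
    ((measurable_const.sub Hd_monotone.measurable).pow_const 2).inv.aestronglyMeasurable (θ ^ 2)⁻¹
    (ae_restrict_of_forall_mem measurableSet_Ioc fun u hu => ?_)
  have hθu := le_one_sub_Hd_of_le ht hθle hu.2
  rw [Real.norm_of_nonneg (by positivity)]
  exact inv_anti₀ (by positivity) (pow_le_pow_left₀ hθ.le hθu 2)

lemma integrable_ite_div_one_sub_Hd (ν : Measure (ℝ × Bool)) [IsFiniteMeasure ν] (ht : 0 ≤ t)
    (hθ : 0 < θ) (hθle : ∀ s ∈ Icc (0 : ℝ) t, θ ≤ 1 - Hd νx s) :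
    Integrable (fun q : ℝ × Bool => (if q.1 ≤ t ∧ q.2 = true then 1 else 0) / (1 - Hd νx q.1))
      ν := by
  refine .of_bound ?_ θ⁻¹ (ae_of_all _ fun q => ?_)
  · exact ((Measurable.ite ((measurable_fst measurableSet_Iic).inter
      (measurableSet_eq_fun measurable_snd measurable_const)) measurable_const
      measurable_const).div
      ((measurable_const.sub Hd_monotone.measurable).comp measurable_fst)).aestronglyMeasurable
  · split_ifs with hq
    · have hθq := le_one_sub_Hd_of_le ht hθle hq.1
      rw [norm_div, norm_one, Real.norm_of_nonneg (by linarith), one_div]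
      exact inv_anti₀ hθ hθq
    · simp [hθ.le]

end Bounded

lemma integral_ite_div_eq_setIntegral_H1m (ν : Measure (ℝ × Bool)) (t : ℝ) {h : ℝ → ℝ}
    (hh : Measurable h) :
    ∫ q, (if q.1 ≤ t ∧ q.2 = true then 1 else 0) / h q.1 ∂ν = ∫ v in Iic t, (h v)⁻¹ ∂(H1m ν) := by
  have hindicator : (fun q : ℝ × Bool => (if q.1 ≤ t ∧ q.2 = true then 1 else 0) / h q.1) =
      (Prod.fst ⁻¹' Iic t ∩ {q | q.2 = true}).indicator fun q => (h q.1)⁻¹ := by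
    ext q
    by_cases hq : q.1 ≤ t ∧ q.2 = true <;> simp [hq]
  rw [hindicator, integral_indicator ((measurable_fst measurableSet_Iic).inter
      (measurableSet_eq_fun measurable_snd measurable_const)),
    ← Measure.restrict_restrict (measurable_fst measurableSet_Iic), H1m]
  exact (setIntegral_map (f := fun v => (h v)⁻¹) measurableSet_Iic hh.inv.aestronglyMeasurable
    measurable_fst.aemeasurable).symm

theorem integral_xi_eq (νx νy : Measure (ℝ × Bool))
    [IsProbabilityMeasure νx] [IsProbabilityMeasure νy]
    (hHyc : Continuous (Hd νy)) (hsuppy : νy {q : ℝ × Bool | q.1 < 0} = 0)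
    (t : ℝ) (ht : 0 ≤ t)
    (θ : ℝ) (hθ : 0 < θ) (hθle : ∀ s ∈ Icc (0 : ℝ) t, θ ≤ 1 - Hd νx s) :
    (∫ q, xi νx t q.1 q.2 ∂νy) =
      (∫ v in Ioc 0 t, (1 - Hd νx v)⁻¹ ∂(H1m νy)) -
        (∫ v in Ioc 0 t, (1 - Hd νy v) / (1 - Hd νx v) ^ 2 ∂(H1m νx)) := by
  have hmeas : Measurable fun u => 1 - Hd νx u := measurable_const.sub Hd_monotone.measurable
  set μ := (H1m νx).restrict (Ioc 0 t)
  have hf : Integrable (fun u => ((1 - Hd νx u) ^ 2)⁻¹) μ :=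
    integrableOn_inv_one_sub_Hd_sq _ ht hθ hθle
  have hxi : (fun q : ℝ × Bool => xi νx t q.1 q.2) = fun q =>
      (if q.1 ≤ t ∧ q.2 = true then 1 else 0) / (1 - Hd νx q.1) -
        ∫ u, (if u ≤ q.1 then 1 else 0) * ((1 - Hd νx u) ^ 2)⁻¹ ∂μ := by
    ext q
    simp only [xi, div_eq_mul_inv]
    rfl
  rw [hxi, integral_sub (integrable_ite_div_one_sub_Hd νy ht hθ hθle)
    (integrable_ite_le_mul measurable_fst hf).integral_prod_left,
    integral_ite_div_eq_setIntegral_H1m _ _ hmeas, integral_integral_ite_le_mul measurable_fst hf]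
  congr 1
  · rw [H1m_restrict_Ioc hHyc hsuppy]
  · refine integral_congr_ae (ae_of_all _ fun u => ?_)
    simp only [measureReal_fst_ge hHyc, div_eq_mul_inv]

theorem Phi_formula_general (νx νy : Measure (ℝ × Bool))
    [IsProbabilityMeasure νx] [IsProbabilityMeasure νy]
    (hHxc : Continuous (Hd νx)) (hHyc : Continuous (Hd νy))
    (hsuppx : νx {q : ℝ × Bool | q.1 < 0} = 0)
    (hsuppy : νy {q : ℝ × Bool | q.1 < 0} = 0)
    (t : ℝ) (ht : 0 ≤ t)
    (θ : ℝ) (hθ : 0 < θ) (hθle : ∀ s ∈ Icc (0 : ℝ) t, θ ≤ 1 - Hd νx s) :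
    (∫ q, xi νx t q.1 q.2 ∂νy) =
      (∫ v in Ioc 0 t, (1 - Hd νx v)⁻¹ ∂(H1m νy)) -
        (∫ v in Ioc 0 t, (1 - Hd νy v) / (1 - Hd νx v) ^ 2 ∂(H1m νx)) ∧
    (∫ q, xi νx t q.1 q.2 ∂νx) = 0 := by
  refine ⟨integral_xi_eq νx νy hHyc hsuppy t ht θ hθ hθle, ?_⟩
  rw [integral_xi_eq νx νx hHxc hsuppx t ht θ hθ hθle, sub_eq_zero]
  refine setIntegral_congr_fun measurableSet_Ioc fun v hv => ?_
  have hpos : 0 < 1 - Hd νx v := hθ.trans_le (hθle v (Ioc_subset_Icc_self hv))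
  field_simp

/-- Lemma 1: `Φ(y,t,x) = ∫ ξ_x dν_y
= ∫_{(0,t]} dH¹_y/(1-H_x) - ∫_{(0,t]} (1-H_y) dH¹_x/(1-H_x)²`;
in particular, with `ν_y = ν_x`, `Φ(x,t,x) = 0`. -/
theorem Phi_formula (νx νy : Measure (ℝ × Bool))
    [IsProbabilityMeasure νx] [IsProbabilityMeasure νy]
    (hHxc : Continuous (Hd νx)) (hHyc : Continuous (Hd νy))
    (hH1xc : Continuous (H1d νx)) (hH1yc : Continuous (H1d νy))
    (hsuppx : νx {q : ℝ × Bool | q.1 < 0} = 0)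
    (hsuppy : νy {q : ℝ × Bool | q.1 < 0} = 0)
    (t : ℝ) (ht : 0 ≤ t)
    (θ : ℝ) (hθ : 0 < θ) (hθle : ∀ s ∈ Icc (0 : ℝ) t, θ ≤ 1 - Hd νx s) :
    (∫ q, xi νx t q.1 q.2 ∂νy) =
      (∫ v in Ioc 0 t, (1 - Hd νx v)⁻¹ ∂(H1m νy)) -
        (∫ v in Ioc 0 t, (1 - Hd νy v) / (1 - Hd νx v) ^ 2 ∂(H1m νx)) ∧
    (∫ q, xi νx t q.1 q.2 ∂νx) = 0 :=
  Phi_formula_general νx νy hHxc hHyc hsuppx hsuppy t ht θ hθ hθle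

end Stmt3
end

section
/- Let ν_x be a probability measure on ℝ × {0,1} (the conditional law of (T, δ) given X = x). Then Φ₁(x,t,x) := ∫ ξ_x(s,d,t)² dν_x(s,d) = ∫_{(0,t]} dH¹_x(v)/(1 − H_x(v))². -/
/-! Write `ξ = A - C(· ∧ t)` with `A(s,d) = 1{s ≤ t, d = 1}/(1 - H(s))` and `C` the Nelson–Aalen
variance function. Then `∫ A² dν = C(t)` and `∫ A · C dν = ∫_{(0,t]} C/(1 - H) dH¹`. Because `H¹`
has no atoms, `C(s)² = 2 ∫_{(0,s]} C dC`; integrating this against the law of `T` and using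
`1 - H(v) = P(T ≥ v)` (no atoms of `H` either) gives `∫ C² dν = 2 ∫_{(0,t]} C (1 - H) dC`, which
equals twice the cross term, so only `C(t)` survives. -/

open MeasureTheory Set

namespace Stmt4

/-- First-coordinate distribution function `H_ν(t) = ν((-∞,t] × {0,1})`. -/
noncomputable def Hd (ν : Measure (ℝ × Bool)) (t : ℝ) : ℝ :=
  (ν (Iic t ×ˢ (univ : Set Bool))).toReal

/-- Subdistribution function `H¹_ν(t) = ν((-∞,t] × {1})`. -/
noncomputable def H1d (ν : Measure (ℝ × Bool)) (t : ℝ) : ℝ :=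
  (ν (Iic t ×ˢ ({true} : Set Bool))).toReal

/-- Lebesgue–Stieltjes measure of `H¹_ν`: first marginal of `ν` restricted to `δ = 1`. -/
noncomputable def H1m (ν : Measure (ℝ × Bool)) : Measure ℝ :=
  Measure.map Prod.fst (ν.restrict {q : ℝ × Bool | q.2 = true})

/-- `ξ_x(s,d,t) = 1{s ≤ t, d = 1}/(1-H_x(s)) - ∫_{(0,t]} 1{u ≤ s} dH¹_x(u)/(1-H_x(u))²`. -/
noncomputable def xi (νx : Measure (ℝ × Bool)) (t s : ℝ) (d : Bool) : ℝ :=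
  (if s ≤ t ∧ d = true then 1 else 0) / (1 - Hd νx s) -
    ∫ u in Ioc 0 t, (if u ≤ s then 1 else 0) / (1 - Hd νx u) ^ 2 ∂(H1m νx)

open Filter Topology

theorem nullSingletonClass_of_continuous_measureReal_Iic (m : Measure ℝ) [IsFiniteMeasure m]
    (hc : Continuous fun s => m.real (Iic s)) : NullSingletonClass m := by
  refine ⟨fun a => ?_⟩
  have hle : ∀ b ∈ Iio a, m.real {a} ≤ m.real (Iic a) - m.real (Iic b) := fun b hb => by
    rw [← measureReal_sdiff (Iic_subset_Iic.2 (le_of_lt hb)) measurableSet_Iic, Iic_sdiff_Iic]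
    exact measureReal_mono (singleton_subset_iff.2 ⟨hb, le_rfl⟩)
  have hlim : Tendsto (fun b => m.real (Iic a) - m.real (Iic b)) (𝓝[<] a) (𝓝 0) := by
    simpa using ((hc.tendsto a).mono_left nhdsWithin_le_nhds).const_sub (m.real (Iic a))
  have : m.real {a} ≤ 0 := ge_of_tendsto hlim (eventually_nhdsWithin_of_forall hle)
  exact (measureReal_eq_zero_iff).1 (le_antisymm this measureReal_nonneg)

theorem integral_indicator_le_mul {κ : Measure ℝ} (g : ℝ → ℝ) (v : ℝ) :
    ∫ u, {p : ℝ × ℝ | p.1 ≤ p.2}.indicator (fun p => g p.1 * g p.2) (u, v) ∂κ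
      = (∫ u in Iic v, g u ∂κ) * g v := by
  rw [← integral_mul_const, ← integral_indicator measurableSet_Iic]
  congr 1 with u

theorem integral_indicator_snd_le_fst_left {κ : Measure ℝ} (F : ℝ → ℝ) (s : ℝ) :
    ∫ v, {p : ℝ × ℝ | p.2 ≤ p.1}.indicator (fun p => F p.2) (s, v) ∂κ = ∫ v in Iic s, F v ∂κ := by
  rw [← integral_indicator measurableSet_Iic]
  rfl

theorem integral_indicator_snd_le_fst_right {μ : Measure ℝ} [IsFiniteMeasure μ] (F : ℝ → ℝ)
    (v : ℝ) :
    ∫ s, {p : ℝ × ℝ | p.2 ≤ p.1}.indicator (fun p => F p.2) (s, v) ∂μ = μ.real (Ici v) * F v := by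
  rw [← smul_eq_mul, ← integral_indicator_const _ measurableSet_Ici]
  rfl

section SquareOfPrimitive

variable {κ : Measure ℝ} [IsFiniteMeasure κ] {g : ℝ → ℝ}

theorem integrable_setIntegral_Iic_mul (hg : Integrable g κ) :
    Integrable (fun v => (∫ u in Iic v, g u ∂κ) * g v) κ := by
  have hL : MeasurableSet {p : ℝ × ℝ | p.1 ≤ p.2} := measurableSet_le measurable_fst measurable_snd
  simpa only [integral_indicator_le_mul] using ((hg.mul_prod hg).indicator hL).integral_prod_right

theorem measure_prod_diagonal [NullSingletonClass κ] : κ.prod κ {p : ℝ × ℝ | p.1 = p.2} = 0 := by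
  rw [Measure.prod_apply (measurableSet_eq_fun measurable_fst measurable_snd)]
  simp [preimage]

theorem sq_integral_eq_two_mul_integral_setIntegral_Iic_mul [NullSingletonClass κ]
    (hg : Integrable g κ) :
    (∫ u, g u ∂κ) ^ 2 = 2 * ∫ v, (∫ u in Iic v, g u ∂κ) * g v ∂κ := by
  set L := {p : ℝ × ℝ | p.1 ≤ p.2}
  set f := fun p : ℝ × ℝ => g p.1 * g p.2
  have hf : Integrable f (κ.prod κ) := hg.mul_prod hg
  have hL : MeasurableSet L := measurableSet_le measurable_fst measurable_snd
  -- `Prod.swap` carries `{v < u}` onto `{u < v}`, which is `L` up to the null diagonal.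
  have hswap : Prod.swap ⁻¹' Lᶜ =ᵐ[κ.prod κ] L := by
    have hne : ∀ᵐ p ∂κ.prod κ, p.1 ≠ p.2 := ae_iff.2 (by simpa using measure_prod_diagonal)
    filter_upwards [hne] with p hp
    change (¬p.2 ≤ p.1) = (p.1 ≤ p.2)
    exact propext ⟨fun h => (lt_of_not_ge h).le, fun h => not_le.2 (lt_of_le_of_ne h hp)⟩
  have hcompl : ∫ p in Lᶜ, f p ∂κ.prod κ = ∫ p in L, f p ∂κ.prod κ := by
    rw [← Measure.measurePreserving_swap.setIntegral_preimage_emb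
      MeasurableEquiv.prodComm.measurableEmbedding, setIntegral_congr_set hswap]
    simp only [f, Prod.fst_swap, Prod.snd_swap, mul_comm]
  calc (∫ u, g u ∂κ) ^ 2 = ∫ p, f p ∂κ.prod κ := by rw [sq, integral_prod_mul]
    _ = 2 * ∫ p, L.indicator f p ∂κ.prod κ := by
      rw [← integral_add_compl hL hf, hcompl, integral_indicator hL]; ring
    _ = 2 * ∫ v, (∫ u in Iic v, g u ∂κ) * g v ∂κ := by
      rw [integral_prod_symm _ (hf.indicator hL)]
      simp only [L, f, integral_indicator_le_mul]

theorem sq_setIntegral_Iic_eq [NullSingletonClass κ] (hg : Integrable g κ) (s : ℝ) :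
    (∫ u in Iic s, g u ∂κ) ^ 2 = 2 * ∫ v in Iic s, (∫ u in Iic v, g u ∂κ) * g v ∂κ := by
  rw [sq_integral_eq_two_mul_integral_setIntegral_Iic_mul hg.restrict]
  congr 1
  refine setIntegral_congr_fun measurableSet_Iic fun v hv => ?_
  rw [Measure.restrict_restrict measurableSet_Iic, Iic_inter_Iic, inf_of_le_left hv]

variable {μ : Measure ℝ} [IsFiniteMeasure μ]

theorem integrable_indicator_snd_le_fst {F : ℝ → ℝ} (hF : Integrable F κ) :
    Integrable ({p : ℝ × ℝ | p.2 ≤ p.1}.indicator fun p => F p.2) (μ.prod κ) :=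
  (hF.comp_snd μ).indicator (measurableSet_le measurable_snd measurable_fst)

theorem integrable_setIntegral_Iic {F : ℝ → ℝ} (hF : Integrable F κ) :
    Integrable (fun s => ∫ v in Iic s, F v ∂κ) μ := by
  simpa only [integral_indicator_snd_le_fst_left] using
    (integrable_indicator_snd_le_fst (μ := μ) hF).integral_prod_left

theorem integral_setIntegral_Iic {F : ℝ → ℝ} (hF : Integrable F κ) :
    ∫ s, ∫ v in Iic s, F v ∂κ ∂μ = ∫ v, μ.real (Ici v) * F v ∂κ := by
  simp_rw [← integral_indicator_snd_le_fst_left]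
  rw [integral_integral_swap
    (f := fun s v => {p : ℝ × ℝ | p.2 ≤ p.1}.indicator (fun p => F p.2) (s, v))
    (integrable_indicator_snd_le_fst hF)]
  simp_rw [integral_indicator_snd_le_fst_right]

theorem integrable_sq_setIntegral_Iic [NullSingletonClass κ] (hg : Integrable g κ) :
    Integrable (fun s => (∫ u in Iic s, g u ∂κ) ^ 2) μ := by
  simp_rw [sq_setIntegral_Iic_eq hg]
  exact (integrable_setIntegral_Iic (integrable_setIntegral_Iic_mul hg)).const_mul 2

theorem integral_sq_setIntegral_Iic [NullSingletonClass κ] (hg : Integrable g κ) :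
    ∫ s, (∫ u in Iic s, g u ∂κ) ^ 2 ∂μ
      = 2 * ∫ v, μ.real (Ici v) * ((∫ u in Iic v, g u ∂κ) * g v) ∂κ := by
  simp_rw [sq_setIntegral_Iic_eq hg]
  rw [integral_const_mul, integral_setIntegral_Iic (integrable_setIntegral_Iic_mul hg)]

end SquareOfPrimitive

section Censored

variable (ν : Measure (ℝ × Bool))

theorem Hd_eq_measureReal_Iic : Hd ν = fun s => ν.fst.real (Iic s) := by
  ext s
  rw [Hd, measureReal_def, Measure.fst_apply measurableSet_Iic, prod_univ]

theorem H1m_apply {A : Set ℝ} (hA : MeasurableSet A) :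
    H1m ν A = ν (Prod.fst ⁻¹' A ∩ {q | q.2 = true}) := by
  rw [H1m, Measure.map_apply measurable_fst hA, Measure.restrict_apply (measurable_fst hA)]

theorem H1d_eq_measureReal_Iic : H1d ν = fun s => (H1m ν).real (Iic s) := by
  ext s
  rw [H1d, measureReal_def, H1m_apply ν measurableSet_Iic]
  rfl

instance [IsFiniteMeasure ν] : IsFiniteMeasure (H1m ν) := by
  unfold H1m
  infer_instance

theorem monotone_Hd [IsFiniteMeasure ν] : Monotone (Hd ν) := by
  rw [Hd_eq_measureReal_Iic]
  exact fun a b hab => measureReal_mono (Iic_subset_Iic.2 hab)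

theorem one_sub_Hd_eq [IsProbabilityMeasure ν] [NullSingletonClass ν.fst] (s : ℝ) :
    1 - Hd ν s = ν.fst.real (Ici s) := by
  rw [Hd_eq_measureReal_Iic, ← compl_Iio, probReal_compl_eq_one_sub measurableSet_Iio,
    measureReal_congr Iio_ae_eq_Iic]

theorem measurableSet_snd_eq_true : MeasurableSet {q : ℝ × Bool | q.2 = true} :=
  (measurableSet_singleton true).preimage measurable_snd

theorem indicator_snd_eq_true (f : ℝ → ℝ) :
    {q : ℝ × Bool | q.2 = true}.indicator (fun q => f q.1)
      = fun q => if q.2 = true then f q.1 else 0 := by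
  ext q
  simp [indicator_apply]

theorem integral_H1m {f : ℝ → ℝ} (hf : AEStronglyMeasurable f (H1m ν)) :
    ∫ s, f s ∂(H1m ν) = ∫ q, (if q.2 = true then f q.1 else 0) ∂ν := by
  rw [H1m, integral_map measurable_fst.aemeasurable hf,
    ← integral_indicator measurableSet_snd_eq_true, indicator_snd_eq_true]

theorem integrable_ite_of_integrable_H1m {f : ℝ → ℝ} (hf : Integrable f (H1m ν)) :
    Integrable (fun q : ℝ × Bool => if q.2 = true then f q.1 else 0) ν := by
  have := (integrable_map_measure hf.1 measurable_fst.aemeasurable).1 hf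
  rw [← indicator_snd_eq_true]
  exact (integrable_indicator_iff measurableSet_snd_eq_true).2 this

theorem H1m_restrict_Iic_eq [NullSingletonClass (H1m ν)]
    (hsupp : ν {q : ℝ × Bool | q.1 < 0} = 0) (t : ℝ) :
    (H1m ν).restrict (Iic t) = (H1m ν).restrict (Ioc 0 t) := by
  have h0 : H1m ν (Iic 0) = 0 := by
    rw [← measure_congr Iio_ae_eq_Iic, H1m_apply ν measurableSet_Iio]
    exact measure_mono_null inter_subset_left hsupp
  rw [← Iic_sdiff_Iic]
  exact Measure.restrict_congr_set (sdiff_null_ae_eq_self h0).symm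

theorem integrable_indicator_Iic_H1m [NullSingletonClass (H1m ν)]
    (hsupp : ν {q : ℝ × Bool | q.1 < 0} = 0) {t : ℝ} {f : ℝ → ℝ}
    (hf : IntegrableOn f (Ioc 0 t) (H1m ν)) : Integrable ((Iic t).indicator f) (H1m ν) := by
  rwa [integrable_indicator_iff measurableSet_Iic, IntegrableOn, H1m_restrict_Iic_eq ν hsupp]

theorem integrable_ite_indicator_Iic [NullSingletonClass (H1m ν)]
    (hsupp : ν {q : ℝ × Bool | q.1 < 0} = 0) {t : ℝ} {f : ℝ → ℝ}
    (hf : IntegrableOn f (Ioc 0 t) (H1m ν)) :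
    Integrable (fun q : ℝ × Bool => if q.2 = true then (Iic t).indicator f q.1 else 0) ν :=
  integrable_ite_of_integrable_H1m ν (integrable_indicator_Iic_H1m ν hsupp hf)

theorem integral_ite_indicator_Iic [NullSingletonClass (H1m ν)]
    (hsupp : ν {q : ℝ × Bool | q.1 < 0} = 0) {t : ℝ} {f : ℝ → ℝ}
    (hf : IntegrableOn f (Ioc 0 t) (H1m ν)) :
    ∫ q, (if q.2 = true then (Iic t).indicator f q.1 else 0) ∂ν = ∫ s in Ioc 0 t, f s ∂(H1m ν) := by
  rw [← integral_H1m ν (integrable_indicator_Iic_H1m ν hsupp hf).1,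
    integral_indicator measurableSet_Iic, H1m_restrict_Iic_eq ν hsupp]

/-- `C(s ∧ t)`, where `C(s) = ∫_{(0,s]} dH¹/(1-H)²` is the variance function of the Nelson–Aalen
estimator; it is the compensator term of `ξ`. -/
noncomputable def nelsonAalenVar (t s : ℝ) : ℝ :=
  ∫ u in Iic s, 1 / (1 - Hd ν u) ^ 2 ∂(H1m ν).restrict (Ioc 0 t)

theorem xi_eq (t s : ℝ) (d : Bool) :
    xi ν t s d = (if s ≤ t ∧ d = true then 1 else 0) / (1 - Hd ν s) - nelsonAalenVar ν t s := by
  rw [xi, nelsonAalenVar, ← integral_indicator measurableSet_Iic]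
  congr 2 with u
  by_cases h : u ≤ s <;> simp [h]

theorem xi_sq_eq (t s : ℝ) (d : Bool) :
    xi ν t s d ^ 2 =
      (if d = true then (Iic t).indicator
        (fun u => 1 / (1 - Hd ν u) ^ 2 - 2 * (nelsonAalenVar ν t u / (1 - Hd ν u))) s else 0)
      + nelsonAalenVar ν t s ^ 2 := by
  rw [xi_eq, indicator_apply]
  generalize 1 - Hd ν s = G
  by_cases hd : d = true
  · by_cases hs : s ≤ t
    · simp only [hd, hs, and_self, if_true, mem_Iic]
      ring
    · simp [hd, hs]
  · simp [hd]

theorem integrableOn_one_div_sq_one_sub_Hd [IsFiniteMeasure ν] {t θ : ℝ} (hθ : 0 < θ)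
    (hθle : ∀ s ∈ Ioc 0 t, θ ≤ 1 - Hd ν s) :
    IntegrableOn (fun u => 1 / (1 - Hd ν u) ^ 2) (Ioc 0 t) (H1m ν) := by
  refine Measure.integrableOn_of_bounded (M := (θ ^ 2)⁻¹) (measure_ne_top _ _)
    ((((monotone_Hd ν).measurable.const_sub 1).pow_const 2).const_div 1).aestronglyMeasurable ?_
  filter_upwards [ae_restrict_mem measurableSet_Ioc] with u hu
  rw [Real.norm_of_nonneg (by positivity), one_div]
  exact inv_anti₀ (by positivity) (pow_le_pow_left₀ hθ.le (hθle u hu) 2)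

variable [IsProbabilityMeasure ν] {t : ℝ}

theorem measureReal_fst_Ici_mul_mul_one_div_sq [NullSingletonClass ν.fst] (x v : ℝ) :
    ν.fst.real (Ici v) * (x * (1 / (1 - Hd ν v) ^ 2)) = x / (1 - Hd ν v) := by
  rw [← one_sub_Hd_eq]
  rcases eq_or_ne (1 - Hd ν v) 0 with h | h
  · simp [h]
  · field_simp

theorem integrableOn_nelsonAalenVar_div [NullSingletonClass ν.fst]
    (hg : IntegrableOn (fun u => 1 / (1 - Hd ν u) ^ 2) (Ioc 0 t) (H1m ν)) :
    IntegrableOn (fun v => nelsonAalenVar ν t v / (1 - Hd ν v)) (Ioc 0 t) (H1m ν) := by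
  have hanti : Antitone fun v => ν.fst.real (Ici v) :=
    fun _ _ hab => measureReal_mono (Ici_subset_Ici.2 hab)
  have hS : AEStronglyMeasurable (fun v => ν.fst.real (Ici v)) ((H1m ν).restrict (Ioc 0 t)) :=
    hanti.measurable.aestronglyMeasurable
  refine ((integrable_setIntegral_Iic_mul hg).bdd_mul (c := 1) hS (ae_of_all _ fun v => ?_)).congr
    (ae_of_all _ fun v => measureReal_fst_Ici_mul_mul_one_div_sq ν _ v)
  rw [Real.norm_of_nonneg measureReal_nonneg]
  exact measureReal_le_one

theorem integrable_nelsonAalenVar_sq [NullSingletonClass (H1m ν)]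
    (hg : IntegrableOn (fun u => 1 / (1 - Hd ν u) ^ 2) (Ioc 0 t) (H1m ν)) :
    Integrable (fun q : ℝ × Bool => nelsonAalenVar ν t q.1 ^ 2) ν := by
  have h : Integrable (fun s => nelsonAalenVar ν t s ^ 2) ν.fst := integrable_sq_setIntegral_Iic hg
  exact (integrable_map_measure h.1 measurable_fst.aemeasurable).1 h

theorem integral_nelsonAalenVar_sq [NullSingletonClass ν.fst] [NullSingletonClass (H1m ν)]
    (hg : IntegrableOn (fun u => 1 / (1 - Hd ν u) ^ 2) (Ioc 0 t) (H1m ν)) :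
    ∫ q, nelsonAalenVar ν t q.1 ^ 2 ∂ν
      = 2 * ∫ v in Ioc 0 t, nelsonAalenVar ν t v / (1 - Hd ν v) ∂(H1m ν) := by
  have h : Integrable (fun s => nelsonAalenVar ν t s ^ 2) ν.fst := integrable_sq_setIntegral_Iic hg
  calc ∫ q, nelsonAalenVar ν t q.1 ^ 2 ∂ν = ∫ s, nelsonAalenVar ν t s ^ 2 ∂ν.fst :=
        (integral_map measurable_fst.aemeasurable h.1).symm
    _ = 2 * ∫ v in Ioc 0 t, ν.fst.real (Ici v) *
          (nelsonAalenVar ν t v * (1 / (1 - Hd ν v) ^ 2)) ∂(H1m ν) :=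
        integral_sq_setIntegral_Iic hg
    _ = 2 * ∫ v in Ioc 0 t, nelsonAalenVar ν t v / (1 - Hd ν v) ∂(H1m ν) := by
        simp_rw [measureReal_fst_Ici_mul_mul_one_div_sq]

end Censored

theorem Phi1_formula_general (νx : Measure (ℝ × Bool)) [IsProbabilityMeasure νx]
    (hHxc : Continuous (Hd νx)) (hH1xc : Continuous (H1d νx))
    (hsuppx : νx {q : ℝ × Bool | q.1 < 0} = 0)
    (t : ℝ)
    (θ : ℝ) (hθ : 0 < θ) (hθle : ∀ s ∈ Icc (0 : ℝ) t, θ ≤ 1 - Hd νx s) :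
    (∫ q, (xi νx t q.1 q.2) ^ 2 ∂νx) =
      ∫ v in Ioc 0 t, 1 / (1 - Hd νx v) ^ 2 ∂(H1m νx) := by
  have : NullSingletonClass νx.fst :=
    nullSingletonClass_of_continuous_measureReal_Iic _ (Hd_eq_measureReal_Iic νx ▸ hHxc)
  have : NullSingletonClass (H1m νx) :=
    nullSingletonClass_of_continuous_measureReal_Iic _ (H1d_eq_measureReal_Iic νx ▸ hH1xc)
  set C := nelsonAalenVar νx t
  set g : ℝ → ℝ := fun u => 1 / (1 - Hd νx u) ^ 2
  set K : ℝ → ℝ := fun v => C v / (1 - Hd νx v)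
  have hg : IntegrableOn g (Ioc 0 t) (H1m νx) :=
    integrableOn_one_div_sq_one_sub_Hd νx hθ fun s hs => hθle s (Ioc_subset_Icc_self hs)
  have hK : IntegrableOn K (Ioc 0 t) (H1m νx) := integrableOn_nelsonAalenVar_div νx hg
  have hgK : IntegrableOn (fun u => g u - 2 * K u) (Ioc 0 t) (H1m νx) := hg.sub (hK.const_mul 2)
  calc ∫ q, xi νx t q.1 q.2 ^ 2 ∂νx
      = ∫ q, (if q.2 = true then (Iic t).indicator (fun u => g u - 2 * K u) q.1 else 0) ∂νx
          + ∫ q, C q.1 ^ 2 ∂νx := by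
        simp_rw [xi_sq_eq]
        exact integral_add (integrable_ite_indicator_Iic νx hsuppx hgK)
          (integrable_nelsonAalenVar_sq νx hg)
    _ = ∫ u in Ioc 0 t, (g u - 2 * K u) ∂(H1m νx) + 2 * ∫ v in Ioc 0 t, K v ∂(H1m νx) := by
        rw [integral_ite_indicator_Iic νx hsuppx hgK, integral_nelsonAalenVar_sq νx hg]
    _ = ∫ u in Ioc 0 t, g u ∂(H1m νx) := by
        rw [integral_sub hg (hK.const_mul 2), integral_const_mul]
        ring

/-- Lemma 2: `Φ₁(x,t,x) = ∫ ξ_x(s,d,t)² dν_x(s,d)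
= ∫_{(0,t]} dH¹_x(v)/(1-H_x(v))²`. -/
theorem Phi1_formula (νx : Measure (ℝ × Bool)) [IsProbabilityMeasure νx]
    (hHxc : Continuous (Hd νx)) (hH1xc : Continuous (H1d νx))
    (hsuppx : νx {q : ℝ × Bool | q.1 < 0} = 0)
    (t : ℝ) (ht : 0 ≤ t)
    (θ : ℝ) (hθ : 0 < θ) (hθle : ∀ s ∈ Icc (0 : ℝ) t, θ ≤ 1 - Hd νx s) :
    (∫ q, (xi νx t q.1 q.2) ^ 2 ∂νx) =
      ∫ v in Ioc 0 t, 1 / (1 - Hd νx v) ^ 2 ∂(H1m νx) :=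
  Phi1_formula_general νx hHxc hH1xc hsuppx t θ hθ hθle

end Stmt4
end

section
/- Let ν_x be a probability measure on ℝ × {0,1} (the conditional law of (T, δ) given X = x). Then Φ₂(x,t,x) := ∫ ξ_x(s,d,t) ξ_x(s,d,∞) dν_x(s,d) = ∫_{(0,t]} dH¹_x(v)/(1 − H_x(v))². -/
/-!
Write `μ` for the law of `T`, `η` for the measure of `H¹`, `c(s) = 1 - H(s) = μ[s, ∞)` (as `H` is
continuous) and `K(r) = ∫_{(-∞, r]} dη / c²`. Since `η` does not charge `(-∞, 0]`,
`ξ(s, d, t) = 1{s ≤ t, d = 1} / c(s) - K(s ∧ t)` and `ξ(s, d, ∞) = 1{d = 1} / c(s) - K(s)`; all of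
these are bounded because `c ≥ θ` on `[0, τ₀]`, which carries `η`. Expanding the product, the term
`1{s ≤ t, d = 1} / c(s)²` integrates to `K(t)` and the others cancel by the identity
`∫ K(s ∧ t) K(s) dμ(s) = ∫_{(-∞, t]} K / c dη + ∫ K(s ∧ t) / c(s) dη(s)`.
Both sides are rewritten by Fubini as `η`-integrals in `u ≤ t` against `dη(u) / c(u)²`, and they
agree by `∫_{[u, ∞)} K dμ = c(u) K(u) + ∫_{[u, ∞)} dη / c`, again Fubini; the endpoint `u` may be
included on the right because `η ≤ μ` has no atoms.
-/

open MeasureTheory Set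

namespace Stmt5

/-- First-coordinate distribution function `H_ν(t) = ν((-∞,t] × {0,1})`. -/
noncomputable def Hd (ν : Measure (ℝ × Bool)) (t : ℝ) : ℝ :=
  (ν (Iic t ×ˢ (univ : Set Bool))).toReal

/-- Subdistribution function `H¹_ν(t) = ν((-∞,t] × {1})`. -/
noncomputable def H1d (ν : Measure (ℝ × Bool)) (t : ℝ) : ℝ :=
  (ν (Iic t ×ˢ ({true} : Set Bool))).toReal

/-- Lebesgue–Stieltjes measure of `H¹_ν`: first marginal of `ν` restricted to `δ = 1`. -/
noncomputable def H1m (ν : Measure (ℝ × Bool)) : Measure ℝ :=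
  Measure.map Prod.fst (ν.restrict {q : ℝ × Bool | q.2 = true})

/-- `ξ_x(s,d,t)` for finite `t`. -/
noncomputable def xi (νx : Measure (ℝ × Bool)) (t s : ℝ) (d : Bool) : ℝ :=
  (if s ≤ t ∧ d = true then 1 else 0) / (1 - Hd νx s) -
    ∫ u in Ioc 0 t, (if u ≤ s then 1 else 0) / (1 - Hd νx u) ^ 2 ∂(H1m νx)

/-- `ξ_x(s,d,∞)`. -/
noncomputable def xiInf (νx : Measure (ℝ × Bool)) (s : ℝ) (d : Bool) : ℝ :=
  (if d = true then 1 else 0) / (1 - Hd νx s) -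
    ∫ u in Ioi 0, (if u ≤ s then 1 else 0) / (1 - Hd νx u) ^ 2 ∂(H1m νx)

open ProbabilityTheory Function

theorem nullSingletonClass_of_continuous_cdf (μ : Measure ℝ) [IsProbabilityMeasure μ]
    (h : Continuous (cdf μ)) : NullSingletonClass μ where
  measure_singleton a := by
    rw [← measure_cdf μ, StieltjesFunction.measure_singleton,
      leftLim_eq_of_tendsto ((h.tendsto a).mono_left nhdsWithin_le_nhds), sub_self,
      ENNReal.ofReal_zero]

theorem nullSingletonClass_of_le {α : Type*} [MeasurableSpace α] {μ η : Measure α}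
    [NullSingletonClass μ] (h : η ≤ μ) : NullSingletonClass η where
  measure_singleton a := nonpos_iff_eq_zero.1 ((h {a}).trans_eq (measure_singleton a))

theorem integral_setIntegral_Iic_mul {μ η : Measure ℝ} [SFinite μ] [SFinite η] {f h : ℝ → ℝ}
    (hf : Integrable f η) (hh : Integrable h μ) :
    ∫ s, (∫ v in Iic s, f v ∂η) * h s ∂μ = ∫ v, f v * ∫ s in Ici v, h s ∂μ ∂η := by
  set F : ℝ → ℝ → ℝ := fun s v => if v ≤ s then h s * f v else 0
  have hF : Integrable (uncurry F) (μ.prod η) := by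
    have : uncurry F = {p : ℝ × ℝ | p.2 ≤ p.1}.indicator fun p => h p.1 * f p.2 := by
      funext ⟨s, v⟩
      simp [F, indicator_apply]
    rw [this]
    exact (hh.mul_prod hf).indicator (measurableSet_le measurable_snd measurable_fst)
  calc ∫ s, (∫ v in Iic s, f v ∂η) * h s ∂μ = ∫ s, ∫ v, F s v ∂η ∂μ := by
        congr 1 with s
        rw [← integral_indicator measurableSet_Iic, ← integral_mul_const]
        congr 1 with v
        by_cases hv : v ≤ s <;> simp [F, hv, mul_comm]
    _ = ∫ v, ∫ s, F s v ∂μ ∂η := integral_integral_swap hF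
    _ = ∫ v, f v * ∫ s in Ici v, h s ∂μ ∂η := by
        congr 1 with v
        rw [← integral_indicator measurableSet_Ici, ← integral_const_mul]
        congr 1 with s
        by_cases hv : v ≤ s <;> simp [F, hv, mul_comm]

theorem norm_setIntegral_le_integral_of_nonneg {α : Type*} [MeasurableSpace α] {η : Measure α}
    {g : α → ℝ} (hg : Integrable g η) (h0 : 0 ≤ g) (s : Set α) :
    ‖∫ v in s, g v ∂η‖ ≤ ∫ v, g v ∂η := by
  rw [Real.norm_of_nonneg (integral_nonneg h0)]
  exact setIntegral_le_integral hg (ae_of_all _ h0)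

theorem monotone_setIntegral_Iic {η : Measure ℝ} {g : ℝ → ℝ} (hg : Integrable g η)
    (h0 : 0 ≤ g) : Monotone fun r => ∫ v in Iic r, g v ∂η := fun _ _ hrs =>
  setIntegral_mono_set hg.integrableOn (ae_of_all _ fun v => h0 v)
    (Iic_subset_Iic.2 hrs).eventuallyLE

theorem antitone_setIntegral_Ici {η : Measure ℝ} {g : ℝ → ℝ} (hg : Integrable g η)
    (h0 : 0 ≤ g) : Antitone fun r => ∫ v in Ici r, g v ∂η := fun _ _ hrs =>
  setIntegral_mono_set hg.integrableOn (ae_of_all _ fun v => h0 v)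
    (Ici_subset_Ici.2 hrs).eventuallyLE

theorem antitone_measureReal_Ici (μ : Measure ℝ) [IsFiniteMeasure μ] :
    Antitone fun s => μ.real (Ici s) := fun _ _ hrs =>
  measureReal_mono (Ici_subset_Ici.2 hrs)

theorem setIntegral_Ici_setIntegral_Iic {μ η : Measure ℝ} [IsFiniteMeasure μ] [SFinite η]
    {g : ℝ → ℝ} (hg : Integrable g η) (u : ℝ) :
    ∫ s in Ici u, (∫ v in Iic s, g v ∂η) ∂μ =
      μ.real (Ici u) * (∫ v in Iic u, g v ∂η) + ∫ v in Ioi u, g v * μ.real (Ici v) ∂η := by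
  have hcut : Integrable ((Ici u).indicator fun _ => (1 : ℝ)) μ :=
    (integrable_const 1).indicator measurableSet_Ici
  have hmax : Integrable (fun v => g v * μ.real (Ici (max u v))) η :=
    hg.mul_bdd ((antitone_measureReal_Ici μ).comp_monotone
      (monotone_const.max monotone_id)).measurable.aestronglyMeasurable
      (ae_of_all _ fun v => by
        rw [Real.norm_of_nonneg measureReal_nonneg]
        exact measureReal_mono (subset_univ _))
  calc ∫ s in Ici u, (∫ v in Iic s, g v ∂η) ∂μ
      = ∫ s, (∫ v in Iic s, g v ∂η) * (Ici u).indicator (fun _ => 1) s ∂μ := by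
        rw [← integral_indicator measurableSet_Ici]
        congr 1 with s
        by_cases hs : u ≤ s <;> simp [hs]
    _ = ∫ v, g v * μ.real (Ici (max u v)) ∂η := by
        rw [integral_setIntegral_Iic_mul hg hcut]
        congr 1 with v
        rw [integral_indicator_const _ measurableSet_Ici, measureReal_restrict_apply
          measurableSet_Ici, Ici_inter_Ici, smul_eq_mul, mul_one]
    _ = μ.real (Ici u) * (∫ v in Iic u, g v ∂η) + ∫ v in Ioi u, g v * μ.real (Ici v) ∂η := by
        rw [← integral_add_compl (measurableSet_Iic (a := u)) hmax, compl_Iic,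
          ← integral_const_mul]
        congr 1
        · refine setIntegral_congr_fun measurableSet_Iic fun v hv => ?_
          rw [max_eq_left hv, mul_comm]
        · exact setIntegral_congr_fun measurableSet_Ioi fun v hv => by
            rw [max_eq_right (le_of_lt hv)]

theorem setIntegral_Ioc_eq_setIntegral_Iic {η : Measure ℝ} {a : ℝ} (h : η (Iic a) = 0)
    (f : ℝ → ℝ) (r : ℝ) : ∫ v in Ioc a r, f v ∂η = ∫ v in Iic r, f v ∂η := by
  refine setIntegral_congr_set (ae_eq_set.2 ⟨by simp [sdiff_eq_empty.2 Ioc_subset_Iic_self], ?_⟩)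
  exact measure_mono_null (fun v hv => not_lt.1 fun hav => hv.2 ⟨hav, hv.1⟩) h

theorem setIntegral_ite_le_div (η : Measure ℝ) (A : Set ℝ) (g : ℝ → ℝ) (s : ℝ) :
    ∫ u in A, (if u ≤ s then 1 else 0) / g u ∂η = ∫ u in A ∩ Iic s, (g u)⁻¹ ∂η := by
  rw [← setIntegral_indicator measurableSet_Iic]
  congr 1 with u
  by_cases hu : u ≤ s <;> simp [hu]

noncomputable def hazardVariance (μ η : Measure ℝ) (r : ℝ) : ℝ :=
  ∫ v in Iic r, (μ.real (Ici v) ^ 2)⁻¹ ∂η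

section HazardVariance

variable {μ η : Measure ℝ} [IsFiniteMeasure μ] [IsFiniteMeasure η] {θ : ℝ}

theorem integrable_inv_measureReal_Ici_pow (hθ : 0 < θ) (hη : ∀ᵐ u ∂η, θ ≤ μ.real (Ici u))
    (n : ℕ) : Integrable (fun u => (μ.real (Ici u) ^ n)⁻¹) η := by
  refine .of_bound ((antitone_measureReal_Ici μ).measurable.pow_const n).inv.aestronglyMeasurable
    (θ ^ n)⁻¹ ?_
  filter_upwards [hη] with u hu
  rw [Real.norm_of_nonneg (by positivity)]
  exact inv_anti₀ (pow_pos hθ n) (pow_le_pow_left₀ hθ.le hu n)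

theorem integrable_inv_measureReal_Ici (hθ : 0 < θ) (hη : ∀ᵐ u ∂η, θ ≤ μ.real (Ici u)) :
    Integrable (fun u => (μ.real (Ici u))⁻¹) η := by
  simpa using integrable_inv_measureReal_Ici_pow hθ hη 1

theorem monotone_hazardVariance (hθ : 0 < θ) (hη : ∀ᵐ u ∂η, θ ≤ μ.real (Ici u)) :
    Monotone (hazardVariance μ η) :=
  monotone_setIntegral_Iic (integrable_inv_measureReal_Ici_pow hθ hη 2) fun _ => by positivity

theorem norm_hazardVariance_le (hθ : 0 < θ) (hη : ∀ᵐ u ∂η, θ ≤ μ.real (Ici u)) (r : ℝ) :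
    ‖hazardVariance μ η r‖ ≤ ∫ v, (μ.real (Ici v) ^ 2)⁻¹ ∂η :=
  norm_setIntegral_le_integral_of_nonneg (integrable_inv_measureReal_Ici_pow hθ hη 2)
    (fun _ => by positivity) _

theorem integrable_hazardVariance_comp_mul {ρ : Measure ℝ} {m h : ℝ → ℝ} (hθ : 0 < θ)
    (hη : ∀ᵐ u ∂η, θ ≤ μ.real (Ici u)) (hm : Measurable m) (hh : Integrable h ρ) :
    Integrable (fun s => hazardVariance μ η (m s) * h s) ρ :=
  hh.bdd_mul ((monotone_hazardVariance hθ hη).measurable.comp hm).aestronglyMeasurable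
    (ae_of_all _ fun s => norm_hazardVariance_le hθ hη (m s))

theorem integrable_hazardVariance {ρ : Measure ℝ} [IsFiniteMeasure ρ] (hθ : 0 < θ)
    (hη : ∀ᵐ u ∂η, θ ≤ μ.real (Ici u)) : Integrable (hazardVariance μ η) ρ :=
  .of_bound (monotone_hazardVariance hθ hη).measurable.aestronglyMeasurable _
    (ae_of_all _ (norm_hazardVariance_le hθ hη))

theorem setIntegral_Ici_hazardVariance [NullSingletonClass η] (hθ : 0 < θ)
    (hη : ∀ᵐ u ∂η, θ ≤ μ.real (Ici u)) (u : ℝ) :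
    ∫ s in Ici u, hazardVariance μ η s ∂μ =
      μ.real (Ici u) * hazardVariance μ η u + ∫ v in Ici u, (μ.real (Ici v))⁻¹ ∂η := by
  have tail := setIntegral_Ici_setIntegral_Iic (μ := μ)
    (integrable_inv_measureReal_Ici_pow hθ hη 2) u
  rw [restrict_Ioi_eq_restrict_Ici] at tail
  refine tail.trans (congrArg _ (setIntegral_congr_ae measurableSet_Ici ?_))
  filter_upwards [hη] with v hv _
  have : μ.real (Ici v) ≠ 0 := (hθ.trans_le hv).ne'
  field_simp

theorem integral_hazardVariance_min_mul [NullSingletonClass η] (hθ : 0 < θ)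
    (hη : ∀ᵐ u ∂η, θ ≤ μ.real (Ici u)) (t : ℝ) :
    ∫ s, hazardVariance μ η (min s t) * hazardVariance μ η s ∂μ =
      ∫ s in Iic t, hazardVariance μ η s * (μ.real (Ici s))⁻¹ ∂η +
        ∫ s, hazardVariance μ η (min s t) * (μ.real (Ici s))⁻¹ ∂η := by
  set f := (Iic t).indicator fun v => (μ.real (Ici v) ^ 2)⁻¹
  have hinv := integrable_inv_measureReal_Ici hθ hη
  have hf : Integrable f η :=
    (integrable_inv_measureReal_Ici_pow hθ hη 2).indicator measurableSet_Iic
  have hmin : ∀ s, hazardVariance μ η (min s t) = ∫ v in Iic s, f v ∂η := fun s => by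
    rw [setIntegral_indicator measurableSet_Iic, Iic_inter_Iic]
    rfl
  have htail : Integrable (fun u => f u * ∫ v in Ici u, (μ.real (Ici v))⁻¹ ∂η) η :=
    hf.mul_bdd
      (antitone_setIntegral_Ici hinv fun _ => by positivity).measurable.aestronglyMeasurable
      (ae_of_all _ fun u =>
        norm_setIntegral_le_integral_of_nonneg hinv (fun _ => by positivity) (Ici u))
  calc ∫ s, hazardVariance μ η (min s t) * hazardVariance μ η s ∂μ
      = ∫ u, f u * ∫ s in Ici u, hazardVariance μ η s ∂μ ∂η := by
        simp_rw [hmin]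
        exact integral_setIntegral_Iic_mul hf (integrable_hazardVariance hθ hη)
    _ = ∫ u, (Iic t).indicator (fun s => hazardVariance μ η s * (μ.real (Ici s))⁻¹) u +
          f u * ∫ v in Ici u, (μ.real (Ici v))⁻¹ ∂η ∂η := by
        refine integral_congr_ae ?_
        filter_upwards [hη] with u hu
        have : μ.real (Ici u) ≠ 0 := (hθ.trans_le hu).ne'
        rw [setIntegral_Ici_hazardVariance hθ hη]
        by_cases hut : u ≤ t
        · simp only [f, indicator_of_mem (mem_Iic.2 hut), mul_add]
          congr 1
          field_simp
        · simp [f, hut]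
    _ = _ := by
        rw [integral_add ((integrable_hazardVariance_comp_mul hθ hη measurable_id' hinv).indicator
            measurableSet_Iic) htail,
          integral_indicator measurableSet_Iic, ← integral_setIntegral_Iic_mul hf hinv]
        simp_rw [hmin]

end HazardVariance

section Censored

variable {ν : Measure (ℝ × Bool)}

instance [IsProbabilityMeasure ν] : IsProbabilityMeasure (ν.map Prod.fst) :=
  Measure.isProbabilityMeasure_map measurable_fst.aemeasurable

instance [IsFiniteMeasure ν] : IsFiniteMeasure (H1m ν) := by
  unfold H1m
  infer_instance

theorem H1m_le_map_fst (ν : Measure (ℝ × Bool)) : H1m ν ≤ ν.map Prod.fst :=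
  Measure.map_mono Measure.restrict_le_self measurable_fst

theorem cdf_map_fst [IsProbabilityMeasure ν] : cdf (ν.map Prod.fst) = Hd ν := by
  ext x
  rw [cdf_eq_real, Hd, measureReal_def, Measure.map_apply measurable_fst measurableSet_Iic,
    prod_univ]

theorem nullSingletonClass_map_fst [IsProbabilityMeasure ν] (hH : Continuous (Hd ν)) :
    NullSingletonClass (ν.map Prod.fst) :=
  nullSingletonClass_of_continuous_cdf _ (by rwa [cdf_map_fst])

theorem one_sub_Hd [IsProbabilityMeasure ν] (hH : Continuous (Hd ν)) (s : ℝ) :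
    1 - Hd ν s = (ν.map Prod.fst).real (Ici s) := by
  have := nullSingletonClass_map_fst hH
  rw [← cdf_map_fst, cdf_eq_real,
    ← probReal_compl_eq_one_sub (μ := ν.map Prod.fst) measurableSet_Iic, compl_Iic,
    measureReal_congr Ioi_ae_eq_Ici]

theorem H1m_Iic_eq_zero [IsProbabilityMeasure ν] (hH : Continuous (Hd ν))
    (h : ν {q | q.1 < 0} = 0) : H1m ν (Iic 0) = 0 := by
  have := nullSingletonClass_map_fst hH
  refine nonpos_iff_eq_zero.1 ((H1m_le_map_fst ν (Iic 0)).trans_eq ?_)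
  rw [← measure_congr Iio_ae_eq_Iic, Measure.map_apply measurable_fst measurableSet_Iio]
  exact h

theorem integral_ite_snd_add {F G : ℝ → ℝ} (hF : Integrable F (H1m ν))
    (hG : Integrable G (ν.map Prod.fst)) :
    ∫ q, ((if q.2 = true then F q.1 else 0) + G q.1) ∂ν =
      ∫ s, F s ∂(H1m ν) + ∫ s, G s ∂(ν.map Prod.fst) := by
  have hS : MeasurableSet {q : ℝ × Bool | q.2 = true} :=
    measurable_snd (measurableSet_singleton true)
  have hF' : IntegrableOn (fun q => F q.1) {q | q.2 = true} ν :=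
    (integrable_map_measure hF.1 measurable_fst.aemeasurable).1 hF
  have hG' : Integrable (fun q => G q.1) ν :=
    (integrable_map_measure hG.1 measurable_fst.aemeasurable).1 hG
  calc ∫ q, ((if q.2 = true then F q.1 else 0) + G q.1) ∂ν
      = ∫ q, ({q : ℝ × Bool | q.2 = true}.indicator (fun q => F q.1) q + G q.1) ∂ν := by
        congr 1 with q
        simp [indicator_apply]
    _ = ∫ s, F s ∂(H1m ν) + ∫ s, G s ∂(ν.map Prod.fst) := by
        rw [integral_add (hF'.integrable_indicator hS) hG', integral_indicator hS, H1m,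
          integral_map measurable_fst.aemeasurable hF.1,
          integral_map measurable_fst.aemeasurable hG.1]

theorem xi_eq [IsProbabilityMeasure ν] (hH : Continuous (Hd ν)) (h0 : H1m ν (Iic 0) = 0)
    (t s : ℝ) (d : Bool) :
    xi ν t s d = (if s ≤ t ∧ d = true then 1 else 0) / (ν.map Prod.fst).real (Ici s) -
      hazardVariance (ν.map Prod.fst) (H1m ν) (min s t) := by
  simp only [xi, one_sub_Hd hH, setIntegral_ite_le_div, Iic_inter_Iic,
    setIntegral_Ioc_eq_setIntegral_Iic h0, min_comm t s, hazardVariance]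

theorem xiInf_eq [IsProbabilityMeasure ν] (hH : Continuous (Hd ν)) (h0 : H1m ν (Iic 0) = 0)
    (s : ℝ) (d : Bool) :
    xiInf ν s d = (if d = true then 1 else 0) / (ν.map Prod.fst).real (Ici s) -
      hazardVariance (ν.map Prod.fst) (H1m ν) s := by
  simp only [xiInf, one_sub_Hd hH, setIntegral_ite_le_div, Ioi_inter_Iic,
    setIntegral_Ioc_eq_setIntegral_Iic h0, hazardVariance]

theorem integral_mul_eq_hazardVariance [IsFiniteMeasure ν] [NullSingletonClass (H1m ν)] {θ : ℝ}
    (hθ : 0 < θ) (hη : ∀ᵐ u ∂(H1m ν), θ ≤ (ν.map Prod.fst).real (Ici u)) (t : ℝ) :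
    ∫ q, ((if q.1 ≤ t ∧ q.2 = true then 1 else 0) / (ν.map Prod.fst).real (Ici q.1) -
          hazardVariance (ν.map Prod.fst) (H1m ν) (min q.1 t)) *
        ((if q.2 = true then 1 else 0) / (ν.map Prod.fst).real (Ici q.1) -
          hazardVariance (ν.map Prod.fst) (H1m ν) q.1) ∂ν =
      hazardVariance (ν.map Prod.fst) (H1m ν) t := by
  set μ := ν.map Prod.fst
  set η := H1m ν
  set K := hazardVariance μ η
  have hw := integrable_inv_measureReal_Ici_pow hθ hη 2
  have hinv := integrable_inv_measureReal_Ici hθ hη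
  have hKinv := integrable_hazardVariance_comp_mul hθ hη measurable_id' hinv
  have hKmin := integrable_hazardVariance_comp_mul hθ hη
    (measurable_id'.min (measurable_const (a := t))) hinv
  have hdiff : Integrable (fun s => (μ.real (Ici s) ^ 2)⁻¹ - K s * (μ.real (Ici s))⁻¹) η :=
    hw.sub hKinv
  have hF : Integrable (fun s => (Iic t).indicator
      (fun s => (μ.real (Ici s) ^ 2)⁻¹ - K s * (μ.real (Ici s))⁻¹) s -
        K (min s t) * (μ.real (Ici s))⁻¹) η :=
    (hdiff.indicator measurableSet_Iic).sub hKmin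
  calc _ = ∫ q, ((if q.2 = true then (Iic t).indicator
          (fun s => (μ.real (Ici s) ^ 2)⁻¹ - K s * (μ.real (Ici s))⁻¹) q.1 -
            K (min q.1 t) * (μ.real (Ici q.1))⁻¹ else 0) + K (min q.1 t) * K q.1) ∂ν := by
        congr 1 with ⟨s, d⟩
        cases d
        · simp only [Bool.false_eq_true, and_false, ↓reduceIte, zero_div]
          ring
        by_cases hst : s ≤ t
        · simp only [hst, and_self, ↓reduceIte, indicator_of_mem (mem_Iic.2 hst), min_eq_left hst]
          ring
        · simp only [hst, and_true, ↓reduceIte, indicator_of_notMem (mt mem_Iic.1 hst)]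
          ring
    _ = (∫ s in Iic t, (μ.real (Ici s) ^ 2)⁻¹ ∂η) - (∫ s in Iic t, K s * (μ.real (Ici s))⁻¹ ∂η) -
          (∫ s, K (min s t) * (μ.real (Ici s))⁻¹ ∂η) + ∫ s, K (min s t) * K s ∂μ := by
        rw [integral_ite_snd_add hF
            (integrable_hazardVariance_comp_mul hθ hη (measurable_id'.min measurable_const)
              (integrable_hazardVariance hθ hη)),
          integral_sub (hdiff.indicator measurableSet_Iic) hKmin,
          integral_indicator measurableSet_Iic, integral_sub hw.integrableOn hKinv.integrableOn]
    _ = K t := by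
        rw [integral_hazardVariance_min_mul hθ hη,
          show K t = ∫ s in Iic t, (μ.real (Ici s) ^ 2)⁻¹ ∂η from rfl]
        ring

end Censored

theorem Phi2_formula_general (νx : Measure (ℝ × Bool)) [IsProbabilityMeasure νx]
    (hHxc : Continuous (Hd νx))
    (hsuppx : νx {q : ℝ × Bool | q.1 < 0} = 0)
    (τ₀ : ℝ) (hτ : H1m νx (Ioi τ₀) = 0)
    (θ : ℝ) (hθ : 0 < θ) (hθle : ∀ s ∈ Icc (0 : ℝ) τ₀, θ ≤ 1 - Hd νx s)
    (t : ℝ) :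
    (∫ q, xi νx t q.1 q.2 * xiInf νx q.1 q.2 ∂νx) =
      ∫ v in Ioc 0 t, 1 / (1 - Hd νx v) ^ 2 ∂(H1m νx) := by
  have := nullSingletonClass_map_fst hHxc
  have := nullSingletonClass_of_le (H1m_le_map_fst νx)
  have h0 := H1m_Iic_eq_zero hHxc hsuppx
  have hθη : ∀ᵐ u ∂(H1m νx), θ ≤ (νx.map Prod.fst).real (Ici u) := by
    filter_upwards [measure_eq_zero_iff_ae_notMem.1 h0, measure_eq_zero_iff_ae_notMem.1 hτ]
      with u hu0 huτ
    rw [← one_sub_Hd hHxc]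
    exact hθle u ⟨(not_le.1 hu0).le, not_lt.1 huτ⟩
  simp only [xi_eq hHxc h0, xiInf_eq hHxc h0]
  rw [integral_mul_eq_hazardVariance hθ hθη t, setIntegral_Ioc_eq_setIntegral_Iic h0]
  simp only [one_sub_Hd hHxc, one_div, hazardVariance]

/-- Lemma 3: `Φ₂(x,t,x) = ∫ ξ_x(s,d,t) ξ_x(s,d,∞) dν_x(s,d)
= ∫_{(0,t]} dH¹_x(v)/(1-H_x(v))²`. -/
theorem Phi2_formula (νx : Measure (ℝ × Bool)) [IsProbabilityMeasure νx]
    (hHxc : Continuous (Hd νx)) (hH1xc : Continuous (H1d νx))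
    (hsuppx : νx {q : ℝ × Bool | q.1 < 0} = 0)
    (τ₀ : ℝ) (hτ : H1m νx (Ioi τ₀) = 0)
    (θ : ℝ) (hθ : 0 < θ) (hθle : ∀ s ∈ Icc (0 : ℝ) τ₀, θ ≤ 1 - Hd νx s)
    (t : ℝ) (ht0 : 0 ≤ t) (htτ : t ≤ τ₀) :
    (∫ q, xi νx t q.1 q.2 * xiInf νx q.1 q.2 ∂νx) =
      ∫ v in Ioc 0 t, 1 / (1 - Hd νx v) ^ 2 ∂(H1m νx) :=
  Phi2_formula_general νx hHxc hsuppx τ₀ hτ θ hθ hθle t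

end Stmt5
end

section
/- Let ν_y and ν_x be probability measures on ℝ × {0,1}. Then ∫ ξ_x(s,d,t)² dν_y(s,d) = A + B − 2C, where A = ∫_{(0,t]} dH¹_y(v)/(1 − H_x(v))², B = 2 ∫_{(0,t]} (1 − H_x(v))^{−2} ( ∫_{[v,t]} (1 − H_y(w)) (1 − H_x(w))^{−2} dH¹_x(w) ) dH¹_x(v), and C = ∫_{(0,t]} (1 − H_x(u))^{−2} ( ∫_{[u,t]} dH¹_y(v)/(1 − H_x(v)) ) dH¹_x(u). -/
open MeasureTheory Set

namespace Stmt6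

/-- First-coordinate distribution function `H_ν(t) = ν((-∞,t] × {0,1})`. -/
noncomputable def Hd (ν : Measure (ℝ × Bool)) (t : ℝ) : ℝ :=
  (ν (Iic t ×ˢ (univ : Set Bool))).toReal

/-- Subdistribution function `H¹_ν(t) = ν((-∞,t] × {1})`. -/
noncomputable def H1d (ν : Measure (ℝ × Bool)) (t : ℝ) : ℝ :=
  (ν (Iic t ×ˢ ({true} : Set Bool))).toReal

/-- Lebesgue–Stieltjes measure of `H¹_ν`: first marginal of `ν` restricted to `δ = 1`. -/
noncomputable def H1m (ν : Measure (ℝ × Bool)) : Measure ℝ :=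
  Measure.map Prod.fst (ν.restrict {q : ℝ × Bool | q.2 = true})

/-- `ξ_x(s,d,t) = 1{s ≤ t, d = 1}/(1-H_x(s)) - ∫_{(0,t]} 1{u ≤ s} dH¹_x(u)/(1-H_x(u))²`. -/
noncomputable def xi (νx : Measure (ℝ × Bool)) (t s : ℝ) (d : Bool) : ℝ :=
  (if s ≤ t ∧ d = true then 1 else 0) / (1 - Hd νx s) -
    ∫ u in Ioc 0 t, (if u ≤ s then 1 else 0) / (1 - Hd νx u) ^ 2 ∂(H1m νx)

end Stmt6

/-
Write `ξ_x = f - g ∘ fst` with `f(s,d) = 1{s ≤ t, d = 1} / (1 - H_x(s))` and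
`g(s) = ∫_{(0,t]} 1{u ≤ s} φ dH¹_x`, `φ = (1 - H_x)⁻²`, and expand the square.
Integrating `f²` against `ν_y` gives `A` and, by Fubini, `f · g` gives `C`.
For `g²`, write `g(s)²` as a double integral over `(u, w)` and integrate `s` out first:
this gives `∫∫ φ(u) φ(w) ν_y([max u w, ∞) × {0,1}) dH¹_x dH¹_x`, where
`ν_y([v, ∞) × {0,1}) = 1 - H_y(v)` because `H_y` is continuous. The integrand is symmetric
and, `H¹_x` being atomless, the diagonal is null, so the double integral is twice the one
over `u ≤ w`, which is `B`. The bound `1 - H_x ≥ θ` on `(-∞, t]` makes every integrand bounded.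
-/

open Filter Topology

namespace MeasureTheory

theorem nullSingletonClass_of_continuous_measureReal_Iic (μ : Measure ℝ) [IsFiniteMeasure μ]
    (hF : Continuous fun r => μ.real (Iic r)) : NullSingletonClass μ := by
  refine ⟨fun a => ?_⟩
  have h_le : ∀ b < a, μ.real {a} ≤ μ.real (Iic a) - μ.real (Iic b) := fun b hb => by
    rw [← measureReal_sdiff (Iic_subset_Iic.2 hb.le) measurableSet_Iic]
    exact measureReal_mono fun x hx => by simp_all
  have h_lim : Tendsto (fun b => μ.real (Iic a) - μ.real (Iic b)) (𝓝[<] a) (𝓝 0) := by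
    have := (tendsto_const_nhds (x := μ.real (Iic a))).sub (hF.tendsto a)
    rw [sub_self] at this
    exact this.mono_left nhdsWithin_le_nhds
  have : μ.real {a} ≤ 0 := ge_of_tendsto h_lim (eventually_nhdsWithin_of_forall h_le)
  exact (measureReal_eq_zero_iff).1 (le_antisymm this measureReal_nonneg)

theorem measureReal_Ici_eq_one_sub (ρ : Measure ℝ) [IsProbabilityMeasure ρ]
    [NullSingletonClass ρ] (v : ℝ) : ρ.real (Ici v) = 1 - ρ.real (Iic v) := by
  rw [← probReal_compl_eq_one_sub measurableSet_Iic, compl_Iic, measureReal_congr Ioi_ae_eq_Ici]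

theorem restrict_Iic_eq_restrict_Ioc {μ : Measure ℝ} {a : ℝ} (h : μ (Iic a) = 0) (b : ℝ) :
    μ.restrict (Iic b) = μ.restrict (Ioc a b) := by
  refine Measure.restrict_congr_set (ae_eq_set.2 ⟨measure_mono_null (fun x hx => ?_) h, by simp⟩)
  simp only [Set.mem_sdiff, mem_Iic, mem_Ioc, not_and, not_le] at hx ⊢
  exact not_lt.1 fun hax => (hx.2 hax).not_ge hx.1

theorem restrict_Ioc_restrict_Ici {μ : Measure ℝ} {a b u : ℝ} (hu : a < u) :
    (μ.restrict (Ioc a b)).restrict (Ici u) = μ.restrict (Icc u b) := by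
  rw [Measure.restrict_restrict measurableSet_Ici]
  congr 1
  ext x
  simp only [mem_inter_iff, mem_Ici, mem_Ioc, mem_Icc]
  exact ⟨fun ⟨hux, _, hxb⟩ => ⟨hux, hxb⟩, fun ⟨hux, hxb⟩ => ⟨hux, hu.trans_le hux, hxb⟩⟩

theorem integral_sub_sq {α : Type*} [MeasurableSpace α] {μ : Measure α} {f g : α → ℝ}
    (hf : MemLp f 2 μ) (hg : MemLp g 2 μ) :
    ∫ x, (f x - g x) ^ 2 ∂μ = ∫ x, f x ^ 2 ∂μ - 2 * ∫ x, f x * g x ∂μ + ∫ x, g x ^ 2 ∂μ := by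
  have hfg : Integrable (fun x => 2 * (f x * g x)) μ := (hf.integrable_mul hg).const_mul 2
  have hf2g : Integrable (fun x => f x ^ 2 - 2 * (f x * g x)) μ := hf.integrable_sq.sub hfg
  have h_expand : (fun x => (f x - g x) ^ 2) = fun x => f x ^ 2 - 2 * (f x * g x) + g x ^ 2 :=
    funext fun x => by ring
  rw [h_expand, integral_add hf2g hg.integrable_sq, integral_sub hf.integrable_sq hfg,
    integral_const_mul]

theorem measure_prod_diagonal_eq_zero (μ : Measure ℝ) [SFinite μ] [NullSingletonClass μ] :
    (μ.prod μ) {p | p.1 = p.2} = 0 := by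
  rw [Measure.prod_apply (measurableSet_eq_fun measurable_fst measurable_snd)]
  simp [Set.preimage]

theorem integral_prod_eq_two_mul_integral_Ici (μ : Measure ℝ) [SFinite μ] [NullSingletonClass μ]
    {F : ℝ → ℝ → ℝ} (hF : Integrable (Function.uncurry F) (μ.prod μ))
    (hsymm : ∀ u w, F u w = F w u) :
    ∫ p, Function.uncurry F p ∂(μ.prod μ) = 2 * ∫ u, ∫ w in Ici u, F u w ∂μ ∂μ := by
  have hS : MeasurableSet {p : ℝ × ℝ | p.1 ≤ p.2} :=
    measurableSet_le measurable_fst measurable_snd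
  -- the complement of `{u ≤ w}` and its mirror image differ only on the diagonal
  have h_mirror : {p : ℝ × ℝ | p.1 ≤ p.2}ᶜ =ᵐ[μ.prod μ] Prod.swap ⁻¹' {p | p.1 ≤ p.2} := by
    refine ae_eq_set.2 ⟨?_, measure_mono_null (fun p hp => ?_) (measure_prod_diagonal_eq_zero μ)⟩
    · exact measure_mono_null (fun p hp => hp.2 (not_le.1 hp.1).le) measure_empty
    · exact le_antisymm (not_not.1 hp.2) hp.1
  have h_compl : ∫ p in {p : ℝ × ℝ | p.1 ≤ p.2}ᶜ, Function.uncurry F p ∂(μ.prod μ)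
      = ∫ p in {p : ℝ × ℝ | p.1 ≤ p.2}, Function.uncurry F p ∂(μ.prod μ) := by
    refine (setIntegral_congr_set h_mirror).trans ?_
    convert (Measure.measurePreserving_swap (μ := μ) (ν := μ)).setIntegral_preimage_emb
      MeasurableEquiv.prodComm.measurableEmbedding (Function.uncurry F) _ using 3 with p
    exact hsymm _ _
  have h_half : ∫ p in {p : ℝ × ℝ | p.1 ≤ p.2}, Function.uncurry F p ∂(μ.prod μ)
      = ∫ u, ∫ w in Ici u, F u w ∂μ ∂μ := by
    rw [← integral_indicator hS, integral_prod _ (hF.indicator hS)]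
    congr with u
    rw [← integral_indicator measurableSet_Ici]
    rfl
  rw [← integral_add_compl hS hF, h_compl, h_half]
  ring

theorem integral_mul_integral_ite_le (σ μ : Measure ℝ) [SFinite σ] [SFinite μ] {a b : ℝ → ℝ}
    (ha : Integrable a σ) (hb : Integrable b μ) :
    ∫ s, a s * ∫ u, (if u ≤ s then 1 else 0) * b u ∂μ ∂σ
      = ∫ u, b u * ∫ s in Ici u, a s ∂σ ∂μ := by
  have h_int : Integrable (Function.uncurry fun s u => a s * ((if u ≤ s then 1 else 0) * b u))
      (σ.prod μ) := by
    refine (ha.norm.mul_prod hb.norm).mono' ?_ (ae_of_all _ fun p => ?_)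
    · exact ha.aestronglyMeasurable.comp_fst.mul
        ((measurable_const.ite (measurableSet_le measurable_snd measurable_fst)
          measurable_const).aestronglyMeasurable.mul hb.aestronglyMeasurable.comp_snd)
    · simp only [Function.uncurry, norm_mul]
      split_ifs <;> simp [mul_nonneg]
  simp_rw [← integral_const_mul (a _)]
  rw [integral_integral_swap h_int]
  congr with u
  rw [← integral_indicator measurableSet_Ici, ← integral_const_mul]
  congr with s
  by_cases h : u ≤ s <;> simp [h, mul_comm]

theorem integral_sq_integral_ite_le (ρ μ : Measure ℝ) [IsFiniteMeasure ρ] [SFinite μ]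
    [NullSingletonClass μ] {b : ℝ → ℝ} (hb : Integrable b μ) :
    ∫ s, (∫ u, (if u ≤ s then 1 else 0) * b u ∂μ) ^ 2 ∂ρ
      = 2 * ∫ u, b u * ∫ w in Ici u, ρ.real (Ici w) * b w ∂μ ∂μ := by
  let k : ℝ → ℝ → ℝ := fun s u => (if u ≤ s then 1 else 0) * b u
  let F : ℝ → ℝ → ℝ := fun u w => ρ.real (Ici (max u w)) * (b u * b w)
  have h_sq : ∀ s, (∫ u, k s u ∂μ) ^ 2 = ∫ p, k s p.1 * k s p.2 ∂(μ.prod μ) := fun s => by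
    rw [sq, integral_prod_mul]
  have h_int : Integrable (Function.uncurry fun s (p : ℝ × ℝ) => k s p.1 * k s p.2)
      (ρ.prod (μ.prod μ)) := by
    refine ((integrable_const (1 : ℝ)).mul_prod (hb.norm.mul_prod hb.norm)).mono' ?_
      (ae_of_all _ fun q => ?_)
    · have h_le : Measurable fun q : ℝ × ℝ => (if q.2 ≤ q.1 then (1 : ℝ) else 0) :=
        measurable_const.ite (measurableSet_le measurable_snd measurable_fst) measurable_const
      have h_u : Measurable fun q : ℝ × ℝ × ℝ => (if q.2.1 ≤ q.1 then (1 : ℝ) else 0) :=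
        h_le.comp (measurable_fst.prodMk measurable_snd.fst)
      have h_w : Measurable fun q : ℝ × ℝ × ℝ => (if q.2.2 ≤ q.1 then (1 : ℝ) else 0) :=
        h_le.comp (measurable_fst.prodMk measurable_snd.snd)
      exact (h_u.aestronglyMeasurable.mul hb.aestronglyMeasurable.comp_fst.comp_snd).mul
        (h_w.aestronglyMeasurable.mul hb.aestronglyMeasurable.comp_snd.comp_snd)
    · simp only [Function.uncurry, k, norm_mul]
      split_ifs <;> simp <;> positivity
  have h_inner : ∀ u w, ∫ s, k s u * k s w ∂ρ = F u w := fun u w => by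
    rw [show F u w = ρ.real (Ici (max u w)) • (b u * b w) from rfl,
      ← integral_indicator_const _ measurableSet_Ici]
    congr with s
    by_cases hu : u ≤ s <;> by_cases hw : w ≤ s <;> simp [k, hu, hw]
  have hF : Integrable (Function.uncurry F) (μ.prod μ) :=
    h_int.integral_prod_right.congr (ae_of_all _ fun p => h_inner p.1 p.2)
  calc ∫ s, (∫ u, k s u ∂μ) ^ 2 ∂ρ
      = ∫ p, ∫ s, k s p.1 * k s p.2 ∂ρ ∂(μ.prod μ) := by
        simp_rw [h_sq]; exact integral_integral_swap h_int
    _ = ∫ p, Function.uncurry F p ∂(μ.prod μ) := by simp only [h_inner]; rfl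
    _ = 2 * ∫ u, ∫ w in Ici u, F u w ∂μ ∂μ :=
        integral_prod_eq_two_mul_integral_Ici μ hF fun u w => by
          simp only [F, max_comm u w, mul_comm (b u)]
    _ = 2 * ∫ u, b u * ∫ w in Ici u, ρ.real (Ici w) * b w ∂μ ∂μ := by
        congr 1
        congr with u
        rw [← integral_const_mul]
        refine setIntegral_congr_fun measurableSet_Ici fun w hw => ?_
        simp only [F, max_eq_right (show u ≤ w from hw)]
        ring

end MeasureTheory

namespace Stmt6

theorem H1m_apply (ν : Measure (ℝ × Bool)) {s : Set ℝ} (hs : MeasurableSet s) :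
    H1m ν s = ν (s ×ˢ {true}) := by
  rw [H1m, Measure.map_apply measurable_fst hs, Measure.restrict_apply (measurable_fst hs)]
  rfl

theorem H1d_eq_measureReal (ν : Measure (ℝ × Bool)) (r : ℝ) :
    H1d ν r = (H1m ν).real (Iic r) := by
  rw [H1d, measureReal_def, H1m_apply ν measurableSet_Iic]

theorem Hd_eq_measureReal (ν : Measure (ℝ × Bool)) (r : ℝ) :
    Hd ν r = (ν.map Prod.fst).real (Iic r) := by
  rw [Hd, measureReal_def, Measure.map_apply measurable_fst measurableSet_Iic, prod_univ]

theorem monotone_Hd (ν : Measure (ℝ × Bool)) [IsFiniteMeasure ν] : Monotone (Hd ν) :=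
  fun r r' h => by
    simp only [Hd_eq_measureReal]
    exact measureReal_mono (Iic_subset_Iic.2 h)

instance isFiniteMeasure_H1m (ν : Measure (ℝ × Bool)) [IsFiniteMeasure ν] :
    IsFiniteMeasure (H1m ν) := by
  unfold H1m
  infer_instance

theorem nullSingletonClass_H1m (ν : Measure (ℝ × Bool)) [IsFiniteMeasure ν]
    (h : Continuous (H1d ν)) : NullSingletonClass (H1m ν) :=
  nullSingletonClass_of_continuous_measureReal_Iic _ (funext (H1d_eq_measureReal ν) ▸ h)

theorem nullSingletonClass_map_fst (ν : Measure (ℝ × Bool)) [IsFiniteMeasure ν]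
    (h : Continuous (Hd ν)) : NullSingletonClass (ν.map Prod.fst) :=
  nullSingletonClass_of_continuous_measureReal_Iic _ (funext (Hd_eq_measureReal ν) ▸ h)

theorem H1m_Iic_zero (ν : Measure (ℝ × Bool)) [NullSingletonClass (H1m ν)]
    (hsupp : ν {q | q.1 < 0} = 0) : H1m ν (Iic 0) = 0 := by
  rw [← measure_congr Iio_ae_eq_Iic, H1m_apply ν measurableSet_Iio]
  exact measure_mono_null (fun q hq => hq.1) hsupp

theorem integral_ite_eq_setIntegral_Iic_H1m (ν : Measure (ℝ × Bool)) (t : ℝ) {h : ℝ → ℝ}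
    (hh : Measurable h) :
    ∫ q, (if q.1 ≤ t ∧ q.2 = true then h q.1 else 0) ∂ν = ∫ s in Iic t, h s ∂(H1m ν) := by
  rw [← integral_indicator measurableSet_Iic, H1m,
    integral_map measurable_fst.aemeasurable (hh.indicator measurableSet_Iic).aestronglyMeasurable,
    ← integral_indicator (show MeasurableSet {q : ℝ × Bool | q.2 = true} from
      (measurableSet_singleton true).preimage measurable_snd)]
  congr with q
  by_cases h1 : q.1 ≤ t <;> by_cases h2 : q.2 = true <;> simp [indicator, h1, h2]

theorem le_one_sub_Hd_of_le {ν : Measure (ℝ × Bool)} [IsFiniteMeasure ν] {t θ : ℝ} (ht : 0 ≤ t)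
    (hθ : ∀ s ∈ Icc (0 : ℝ) t, θ ≤ 1 - Hd ν s) {s : ℝ} (hs : s ≤ t) : θ ≤ 1 - Hd ν s := by
  rcases le_total 0 s with h0 | h0
  · exact hθ s ⟨h0, hs⟩
  · linarith [hθ 0 ⟨le_rfl, ht⟩, monotone_Hd ν h0]

section Terms

variable {νx νy : Measure (ℝ × Bool)} [IsFiniteMeasure νx] {t θ : ℝ}

theorem integrableOn_inv_one_sub_Hd_pow (μ : Measure ℝ) [IsFiniteMeasure μ] (hθ : 0 < θ)
    (hθt : ∀ s ≤ t, θ ≤ 1 - Hd νx s) (n : ℕ) :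
    IntegrableOn (fun s => ((1 - Hd νx s) ^ n)⁻¹) (Iic t) μ := by
  have hm := (monotone_Hd νx).measurable
  refine Measure.integrableOn_of_bounded (M := (θ ^ n)⁻¹) (measure_ne_top _ _) (by fun_prop)
    (ae_restrict_of_forall_mem measurableSet_Iic fun s hs => ?_)
  have hpos : 0 < θ ^ n := pow_pos hθ n
  have hle : θ ^ n ≤ (1 - Hd νx s) ^ n := pow_le_pow_left₀ hθ.le (hθt s hs) n
  rw [Real.norm_of_nonneg (inv_nonneg.2 (hpos.le.trans hle))]
  exact inv_anti₀ hpos hle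

theorem measurable_integral_ite_div :
    Measurable fun s =>
      ∫ u in Ioc 0 t, (if u ≤ s then 1 else 0) / (1 - Hd νx u) ^ 2 ∂(H1m νx) := by
  have hm := (monotone_Hd νx).measurable
  refine (StronglyMeasurable.integral_prod_right (f := fun s u =>
    (if u ≤ s then (1 : ℝ) else 0) / (1 - Hd νx u) ^ 2) ?_).measurable
  exact ((measurable_const.ite (measurableSet_le measurable_snd measurable_fst)
    measurable_const).div (by fun_prop)).stronglyMeasurable

theorem memLp_ite_div (μ : Measure (ℝ × Bool)) [IsFiniteMeasure μ] (p : ENNReal) (hθ : 0 < θ)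
    (hθt : ∀ s ≤ t, θ ≤ 1 - Hd νx s) :
    MemLp (fun q : ℝ × Bool => (if q.1 ≤ t ∧ q.2 = true then 1 else 0) / (1 - Hd νx q.1))
      p μ := by
  have hm := (monotone_Hd νx).measurable
  refine MemLp.of_bound (Measurable.aestronglyMeasurable ?_) θ⁻¹ (ae_of_all _ fun q => ?_)
  · exact (measurable_const.ite ((measurableSet_le measurable_fst measurable_const).inter
      (measurableSet_eq_fun measurable_snd measurable_const)) measurable_const).div (by fun_prop)
  · split_ifs with h
    · rw [one_div, Real.norm_of_nonneg (inv_nonneg.2 (hθ.le.trans (hθt _ h.1)))]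
      exact inv_anti₀ hθ (hθt _ h.1)
    · simpa using hθ.le

theorem memLp_integral_ite_div (μ : Measure (ℝ × Bool)) [IsFiniteMeasure μ] (p : ENNReal)
    (hθ : 0 < θ) (hθt : ∀ s ≤ t, θ ≤ 1 - Hd νx s) :
    MemLp (fun q : ℝ × Bool =>
      ∫ u in Ioc 0 t, (if u ≤ q.1 then 1 else 0) / (1 - Hd νx u) ^ 2 ∂(H1m νx)) p μ := by
  have hb : IntegrableOn (fun u => 1 / (1 - Hd νx u) ^ 2) (Ioc 0 t) (H1m νx) := by
    simpa using (integrableOn_inv_one_sub_Hd_pow _ hθ hθt 2).mono_set Ioc_subset_Iic_self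
  refine MemLp.of_bound (measurable_integral_ite_div.comp measurable_fst).aestronglyMeasurable
    _ (ae_of_all _ fun q => norm_integral_le_of_norm_le hb (ae_of_all _ fun u => ?_))
  split_ifs <;> simp [sq_nonneg]

theorem integral_sq_ite_div (h0 : H1m νy (Iic 0) = 0) :
    ∫ q, ((if q.1 ≤ t ∧ q.2 = true then 1 else 0) / (1 - Hd νx q.1)) ^ 2 ∂νy
      = ∫ v in Ioc 0 t, 1 / (1 - Hd νx v) ^ 2 ∂(H1m νy) := by
  have hm := (monotone_Hd νx).measurable
  rw [← restrict_Iic_eq_restrict_Ioc h0, ← integral_ite_eq_setIntegral_Iic_H1m νy t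
    (h := fun v => 1 / (1 - Hd νx v) ^ 2) (by fun_prop)]
  congr with q
  split_ifs <;> simp

theorem integral_ite_div_mul_integral_ite_div [IsFiniteMeasure νy] (hθ : 0 < θ)
    (hθt : ∀ s ≤ t, θ ≤ 1 - Hd νx s) (h0 : H1m νy (Iic 0) = 0) :
    ∫ q, (if q.1 ≤ t ∧ q.2 = true then 1 else 0) / (1 - Hd νx q.1) *
        ∫ u in Ioc 0 t, (if u ≤ q.1 then 1 else 0) / (1 - Hd νx u) ^ 2 ∂(H1m νx) ∂νy
      = ∫ u in Ioc 0 t, (1 / (1 - Hd νx u) ^ 2) *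
          (∫ v in Icc u t, (1 - Hd νx v)⁻¹ ∂(H1m νy)) ∂(H1m νx) := by
  have hm := (monotone_Hd νx).measurable
  have ha : IntegrableOn (fun s => (1 - Hd νx s)⁻¹) (Ioc 0 t) (H1m νy) := by
    simpa using (integrableOn_inv_one_sub_Hd_pow _ hθ hθt 1).mono_set Ioc_subset_Iic_self
  have hb : IntegrableOn (fun u => 1 / (1 - Hd νx u) ^ 2) (Ioc 0 t) (H1m νx) := by
    simpa using (integrableOn_inv_one_sub_Hd_pow _ hθ hθt 2).mono_set Ioc_subset_Iic_self
  calc _ = ∫ s in Ioc 0 t, (1 - Hd νx s)⁻¹ *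
        ∫ u in Ioc 0 t, (if u ≤ s then 1 else 0) / (1 - Hd νx u) ^ 2 ∂(H1m νx) ∂(H1m νy) := by
        rw [← restrict_Iic_eq_restrict_Ioc h0, ← integral_ite_eq_setIntegral_Iic_H1m νy t
          (h := fun s => (1 - Hd νx s)⁻¹ *
            ∫ u in Ioc 0 t, (if u ≤ s then 1 else 0) / (1 - Hd νx u) ^ 2 ∂(H1m νx))
          ((by fun_prop : Measurable fun s => (1 - Hd νx s)⁻¹).mul measurable_integral_ite_div)]
        congr with q
        split_ifs <;> simp [div_eq_inv_mul]
    _ = ∫ u in Ioc 0 t, 1 / (1 - Hd νx u) ^ 2 *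
          ∫ s in Ici u, (1 - Hd νx s)⁻¹ ∂((H1m νy).restrict (Ioc 0 t)) ∂(H1m νx) := by
        simp only [← mul_one_div (ite _ _ _)]
        exact integral_mul_integral_ite_le _ _ ha hb
    _ = _ := setIntegral_congr_fun measurableSet_Ioc fun u hu => by
        rw [restrict_Ioc_restrict_Ici hu.1]

theorem integral_sq_integral_ite_div [IsProbabilityMeasure νy] [NullSingletonClass (H1m νx)]
    [NullSingletonClass (νy.map Prod.fst)] (hθ : 0 < θ) (hθt : ∀ s ≤ t, θ ≤ 1 - Hd νx s) :
    ∫ q, (∫ u in Ioc 0 t, (if u ≤ q.1 then 1 else 0) / (1 - Hd νx u) ^ 2 ∂(H1m νx)) ^ 2 ∂νy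
      = 2 * ∫ v in Ioc 0 t, (1 / (1 - Hd νx v) ^ 2) *
          (∫ w in Icc v t, (1 - Hd νy w) / (1 - Hd νx w) ^ 2 ∂(H1m νx)) ∂(H1m νx) := by
  have hb : IntegrableOn (fun u => 1 / (1 - Hd νx u) ^ 2) (Ioc 0 t) (H1m νx) := by
    simpa using (integrableOn_inv_one_sub_Hd_pow _ hθ hθt 2).mono_set Ioc_subset_Iic_self
  have := Measure.isProbabilityMeasure_map (μ := νy) measurable_fst.aemeasurable
  rw [← integral_map measurable_fst.aemeasurable
    (measurable_integral_ite_div.pow_const 2).aestronglyMeasurable]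
  simp only [← mul_one_div (ite _ _ _)]
  rw [integral_sq_integral_ite_le _ _ hb]
  congr 1
  refine setIntegral_congr_fun measurableSet_Ioc fun u hu => ?_
  rw [restrict_Ioc_restrict_Ici hu.1]
  congr 1
  refine setIntegral_congr_fun measurableSet_Icc fun w _ => ?_
  rw [measureReal_Ici_eq_one_sub, ← Hd_eq_measureReal, mul_one_div]

end Terms

theorem Phi1_general_decomposition_general (νx νy : Measure (ℝ × Bool))
    [IsProbabilityMeasure νx] [IsProbabilityMeasure νy]
    (hHyc : Continuous (Hd νy))
    (hH1xc : Continuous (H1d νx)) (hH1yc : Continuous (H1d νy))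
    (hsuppy : νy {q : ℝ × Bool | q.1 < 0} = 0)
    (t : ℝ) (ht : 0 ≤ t)
    (θ : ℝ) (hθ : 0 < θ) (hθle : ∀ s ∈ Icc (0 : ℝ) t, θ ≤ 1 - Hd νx s)
    (A B C : ℝ)
    (hA : A = ∫ v in Ioc 0 t, 1 / (1 - Hd νx v) ^ 2 ∂(H1m νy))
    (hB : B = 2 * ∫ v in Ioc 0 t, (1 / (1 - Hd νx v) ^ 2) *
        (∫ w in Icc v t, (1 - Hd νy w) / (1 - Hd νx w) ^ 2 ∂(H1m νx)) ∂(H1m νx))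
    (hC : C = ∫ u in Ioc 0 t, (1 / (1 - Hd νx u) ^ 2) *
        (∫ v in Icc u t, (1 - Hd νx v)⁻¹ ∂(H1m νy)) ∂(H1m νx)) :
    (∫ q, (xi νx t q.1 q.2) ^ 2 ∂νy) = A + B - 2 * C := by
  subst hA hB hC
  have hθt : ∀ s ≤ t, θ ≤ 1 - Hd νx s := fun s hs => le_one_sub_Hd_of_le ht hθle hs
  have := nullSingletonClass_H1m νx hH1xc
  have := nullSingletonClass_H1m νy hH1yc
  have := nullSingletonClass_map_fst νy hHyc
  have h0 : H1m νy (Iic 0) = 0 := H1m_Iic_zero νy hsuppy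
  unfold xi
  rw [integral_sub_sq (memLp_ite_div νy 2 hθ hθt) (memLp_integral_ite_div νy 2 hθ hθt),
    integral_sq_ite_div h0, integral_ite_div_mul_integral_ite_div hθ hθt h0,
    integral_sq_integral_ite_div hθ hθt]
  ring

/-- proof of Lemma 2, general `y`: `∫ ξ_x(s,d,t)² dν_y(s,d) = A + B - 2C`. -/
theorem Phi1_general_decomposition (νx νy : Measure (ℝ × Bool))
    [IsProbabilityMeasure νx] [IsProbabilityMeasure νy]
    (hHxc : Continuous (Hd νx)) (hHyc : Continuous (Hd νy))
    (hH1xc : Continuous (H1d νx)) (hH1yc : Continuous (H1d νy))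
    (hsuppx : νx {q : ℝ × Bool | q.1 < 0} = 0)
    (hsuppy : νy {q : ℝ × Bool | q.1 < 0} = 0)
    (t : ℝ) (ht : 0 ≤ t)
    (θ : ℝ) (hθ : 0 < θ) (hθle : ∀ s ∈ Icc (0 : ℝ) t, θ ≤ 1 - Hd νx s)
    (A B C : ℝ)
    (hA : A = ∫ v in Ioc 0 t, 1 / (1 - Hd νx v) ^ 2 ∂(H1m νy))
    (hB : B = 2 * ∫ v in Ioc 0 t, (1 / (1 - Hd νx v) ^ 2) *
        (∫ w in Icc v t, (1 - Hd νy w) / (1 - Hd νx w) ^ 2 ∂(H1m νx)) ∂(H1m νx))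
    (hC : C = ∫ u in Ioc 0 t, (1 / (1 - Hd νx u) ^ 2) *
        (∫ v in Icc u t, (1 - Hd νx v)⁻¹ ∂(H1m νy)) ∂(H1m νx)) :
    (∫ q, (xi νx t q.1 q.2) ^ 2 ∂νy) = A + B - 2 * C :=
  Phi1_general_decomposition_general νx νy hHyc hH1xc hH1yc hsuppy t ht θ hθ hθle A B C hA hB hC

end Stmt6
end
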